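/- A pseudoconnection ∇ on ξ is strongly flat (i.e., E^∇ = 0 and L^∇ = 0) if and only if its exterior derivative d^∇ is a chain complex (i.e., d^∇∘d^∇ = 0 on Ω^k(ξ) for all k ≥ 0). -/
import Mathlib


/-!
Algebraic model of smooth forms with values in a vector bundle, following the paper's setup:
`R` plays the role of the ring `Ω⁰(M)` of smooth functions, `Ω k` of the `R`-module `Ω^k(M)`
of smooth `k`-forms, `S` of the `R`-module `Ω⁰(ξ)` of smooth sections of a vector bundle `ξ`,
and `Ω k ⊗[R] S` of `Ω^k(ξ) = Ω^k(M) ⊗_{Ω⁰(M)} Ω⁰(ξ)`.  A bundle homomorphism over the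
identity corresponds to an `R`-linear map `S →ₗ[R] S`; its induced action on `Ω^k(ξ)` is
`LinearMap.lTensor`.  `d0 : R →ₗ[ℝ] Ω 1` and `d k : Ω k →ₗ[ℝ] Ω (k+1)` model the exterior
derivative and `wedge` the wedge product of scalar forms.
-/

open TensorProduct

section PseudoConnections

variable {R : Type} [CommRing R] [Algebra ℝ R]
variable {Ω : ℕ → Type} [∀ k, AddCommGroup (Ω k)] [∀ k, Module R (Ω k)]
  [∀ k, Module ℝ (Ω k)] [∀ k, IsScalarTower ℝ R (Ω k)]
variable {S : Type} [AddCommGroup S] [Module R S] [Module ℝ S] [IsScalarTower ℝ R S]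

/-- The alternating product `β ∧_α ·  : Ω^l(ξ) → Ω^{k+l}(ξ)` induced by a bundle
homomorphism `α`, determined on generators by `β ∧_α (ω ⊗ s) = (β ∧ ω) ⊗ α s`.
Taking `α = LinearMap.id` gives the ordinary alternating product `∧`. -/
noncomputable def wedgeB (wedge : ∀ k l : ℕ, Ω k →ₗ[R] Ω l →ₗ[R] Ω (k + l))
    (k l : ℕ) (α : S →ₗ[R] S) (β : Ω k) : Ω l ⊗[R] S →ₗ[R] Ω (k + l) ⊗[R] S :=
  LinearMap.rTensor S (wedge k l β) ∘ₗ LinearMap.lTensor (Ω l) α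

/-- Cast between scalar form degrees. -/
noncomputable def mcast {a b : ℕ} (h : a = b) : Ω a ≃ₗ[ℝ] Ω b := by
  subst h; exact LinearEquiv.refl ℝ _

/-- Cast between bundle-valued form degrees. -/
noncomputable def ocast {a b : ℕ} (h : a = b) : Ω a ⊗[R] S ≃ₗ[ℝ] Ω b ⊗[R] S := by
  subst h; exact LinearEquiv.refl ℝ _

/-- `E^∇ = d^∇ ∘ ∇`. -/
noncomputable def Emap (nabla : S →ₗ[ℝ] Ω 1 ⊗[R] S)
    (D : ∀ k, Ω k ⊗[R] S →ₗ[ℝ] Ω (k+1) ⊗[R] S) : S → Ω 2 ⊗[R] S :=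
  fun s => D 1 (nabla s)

/-- `L^∇ = P ∘ ∇ − ∇ ∘ P`. -/
noncomputable def Lmap (P : S →ₗ[R] S) (nabla : S →ₗ[ℝ] Ω 1 ⊗[R] S) : S → Ω 1 ⊗[R] S :=
  fun s => LinearMap.lTensor (Ω 1) P (nabla s) - nabla (P s)

/-- The curvature form `F^∇ = P ∘ d^∇ ∘ ∇ − d^∇ ∘ P ∘ ∇ + d^∇ ∘ ∇ ∘ P`. -/
noncomputable def Fmap (P : S →ₗ[R] S) (nabla : S →ₗ[ℝ] Ω 1 ⊗[R] S)
    (D : ∀ k, Ω k ⊗[R] S →ₗ[ℝ] Ω (k+1) ⊗[R] S) : S → Ω 2 ⊗[R] S :=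
  fun s => LinearMap.lTensor (Ω 2) P (D 1 (nabla s)) - D 1 (LinearMap.lTensor (Ω 1) P (nabla s))
    + D 1 (nabla (P s))

/-- `G^∇ = d^∇ ∘ d^∇ ∘ ∇`. -/
noncomputable def Gmap (nabla : S →ₗ[ℝ] Ω 1 ⊗[R] S)
    (D : ∀ k, Ω k ⊗[R] S →ₗ[ℝ] Ω (k+1) ⊗[R] S) : S → Ω 3 ⊗[R] S :=
  fun s => D 2 (D 1 (nabla s))

/-- A pseudoconnection `∇` on `ξ` is strongly flat (`E^∇ = 0` and `L^∇ = 0`)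
if and only if its exterior derivative `d^∇` is a chain complex
(`d^∇∘d^∇ = 0` on `Ω^k(ξ)` for all `k ≥ 0`).  The hypothesis `hdet₁` expresses
the property of the smooth context that a bundle-valued `1`-form killed by wedging
with every exact `1`-form vanishes. -/
theorem strongly_flat_iff_chain_complex
    (d0 : R →ₗ[ℝ] Ω 1) (d : ∀ k, Ω k →ₗ[ℝ] Ω (k+1))
    (wedge : ∀ k l : ℕ, Ω k →ₗ[R] Ω l →ₗ[R] Ω (k + l))
    -- the identification `Ω⁰(M) = Ω^0(M)` and the axioms of the smooth context
    (e : R ≃ₗ[R] Ω 0)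
    (hde : ∀ f : R, d 0 (e f) = d0 f)
    (hd0_one : d0 1 = 0)
    (hwedge_zero_left : ∀ (l : ℕ) (f : R) (ω : Ω l),
      wedge 0 l (e f) ω = mcast (show l = 0 + l by omega) (f • ω))
    (hdd : ∀ (k : ℕ) (ω : Ω k), d (k+1) (d k ω) = 0)
    (hd_wedge : ∀ (k l : ℕ) (ω : Ω k) (η : Ω l),
      d (k+l) (wedge k l ω η)
        = mcast (show (k+1)+l = (k+l)+1 by omega) (wedge (k+1) l (d k ω) η)
          + ((-1:ℤ)^k) • (show Ω (k+l+1) from wedge k (l+1) ω (d l η)))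
    (hassoc : ∀ (k l m : ℕ) (ω : Ω k) (η : Ω l) (ζ : Ω m),
      wedge (k+l) m (wedge k l ω η) ζ
        = mcast (show k+(l+m) = (k+l)+m by omega) (wedge k (l+m) ω (wedge l m η ζ)))
    -- the pseudoconnection with principal homomorphism `P`
    (P : S →ₗ[R] S) (nabla : S →ₗ[ℝ] Ω 1 ⊗[R] S)
    (hLeib : ∀ (f : R) (s : S), nabla (f • s) = d0 f ⊗ₜ[R] P s + f • nabla s)
    -- its exterior derivative, determined on generators
    (D : ∀ k, Ω k ⊗[R] S →ₗ[ℝ] Ω (k+1) ⊗[R] S)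
    (hD : ∀ (k : ℕ) (ω : Ω k) (s : S),
      D k (ω ⊗ₜ[R] s) = d k ω ⊗ₜ[R] P s
        + ((-1:ℤ)^k) • wedgeB wedge k 1 LinearMap.id ω (nabla s))
    (hdet1 : ∀ T : Ω 1 ⊗[R] S,
      (∀ f : R, wedgeB wedge 1 1 LinearMap.id (d0 f) T = 0) → T = 0) :
    ((∀ s : S, Emap nabla D s = 0) ∧ (∀ s : S, Lmap P nabla s = 0)) ↔
      (∀ (k : ℕ) (T : Ω k ⊗[R] S), D (k+1) (D k T) = 0) := by
  classical
  have wB : ∀ (k l : ℕ) (α : S →ₗ[R] S) (β : Ω k) (η : Ω l) (t : S),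
      wedgeB wedge k l α β (η ⊗ₜ[R] t) = wedge k l β η ⊗ₜ[R] α t := by
    intro k l α β η t
    simp [wedgeB]
  have hw : ∀ (k : ℕ) (ω : Ω k) (η : Ω 1),
      d (k+1) (wedge k 1 ω η)
        = wedge (k+1) 1 (d k ω) η + ((-1:ℤ)^k) • wedge k 2 ω (d 1 η) :=
    fun k ω η => hd_wedge k 1 ω η
  have ha : ∀ (k : ℕ) (ω : Ω k) (η : Ω 1) (ζ : Ω 1),
      wedge (k+1) 1 (wedge k 1 ω η) ζ = wedge k 2 ω (wedge 1 1 η ζ) :=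
    fun k ω η ζ => hassoc k 1 1 ω η ζ
  have hα : ∀ (k l : ℕ) (β : Ω k) (T : Ω l ⊗[R] S),
      wedgeB wedge k l P β T
        = wedgeB wedge k l LinearMap.id β (LinearMap.lTensor (Ω l) P T) := by
    intro k l β T
    induction T using TensorProduct.induction_on with
    | zero => simp
    | tmul η t => simp [wB, wedgeB]
    | add x y hx hy => rw [map_add, hx, hy, map_add, map_add]
  have hsq : ∀ k : ℕ, ((-1:ℤ)^k) * ((-1:ℤ)^k) = 1 := by
    intro k
    rw [← pow_add]
    exact Even.neg_one_pow ⟨k, rfl⟩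
  have hassocB : ∀ (k : ℕ) (ω : Ω k) (η : Ω 1) (T : Ω 1 ⊗[R] S),
      wedgeB wedge (k+1) 1 LinearMap.id (wedge k 1 ω η) T
        = wedgeB wedge k 2 LinearMap.id ω (wedgeB wedge 1 1 LinearMap.id η T) := by
    intro k ω η T
    induction T using TensorProduct.induction_on with
    | zero => simp
    | tmul ζ t => rw [wB, wB, wB, ha]; rfl
    | add x y hx hy => rw [map_add, hx, hy, map_add, map_add]
  have key1 : ∀ (k : ℕ) (ω : Ω k) (T : Ω 1 ⊗[R] S),
      D (k+1) (wedgeB wedge k 1 LinearMap.id ω T)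
        = wedgeB wedge (k+1) 1 P (d k ω) T
          + ((-1:ℤ)^k) • wedgeB wedge k 2 LinearMap.id ω (D 1 T) := by
    intro k ω T
    induction T using TensorProduct.induction_on with
    | zero => simp
    | tmul η t =>
        rw [wB, hD (k+1), hD 1, wB, hw, hassocB]
        simp only [LinearMap.id_coe, id_eq, map_add, map_zsmul, add_tmul, smul_tmul', wB,
          smul_add, smul_smul]
        module
    | add x y hx hy =>
        rw [map_add, map_add, hx, hy, map_add, map_add, map_add, smul_add]
        abel
  have key2 : ∀ (k : ℕ) (ω : Ω k) (s : S),
      D (k+1) (D k (ω ⊗ₜ[R] s))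
        = ((-1:ℤ)^k) • wedgeB wedge (k+1) 1 LinearMap.id (d k ω) (Lmap P nabla s)
          + wedgeB wedge k 2 LinearMap.id ω (Emap nabla D s) := by
    intro k ω s
    rw [hD k, map_add, map_zsmul, hD (k+1), hdd, zero_tmul, zero_add, key1, hα]
    rw [Lmap, Emap]
    simp only [map_sub, smul_add, smul_sub, smul_smul, hsq k, one_smul, pow_succ,
      mul_comm ((-1:ℤ)^k) (-1:ℤ), neg_one_mul, neg_smul]
    abel
  constructor
  · rintro ⟨hE, hL⟩ k T
    induction T using TensorProduct.induction_on with
    | zero => simp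
    | tmul ω s =>
        rw [key2, hE s, hL s, map_zero, map_zero, smul_zero, add_zero]
    | add x y hx hy => rw [map_add, map_add, hx, hy, add_zero]
  · intro h
    have hw1 : ∀ T : Ω 1 ⊗[R] S, wedgeB wedge 0 1 LinearMap.id (e 1) T = T := by
      intro T
      induction T using TensorProduct.induction_on with
      | zero => simp
      | tmul η t =>
          rw [wB]
          have h2 : wedge 0 1 (e 1) η = η := by
            calc wedge 0 1 (e 1) η
                = mcast (show (1:ℕ) = 0 + 1 by omega) ((1:R) • η) :=
                  hwedge_zero_left 1 1 η
              _ = (1:R) • η := rfl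
              _ = η := one_smul _ _
          rw [h2]
          rfl
      | add x y hx hy => rw [map_add, hx, hy]
    have hone : ∀ s : S, D 0 ((e 1) ⊗ₜ[R] s) = nabla s := by
      intro s
      rw [hD 0, hde, hd0_one, zero_tmul]
      simp [hw1]
    have hE : ∀ s : S, Emap nabla D s = 0 := by
      intro s
      have h0 := h 0 ((e 1) ⊗ₜ[R] s)
      rw [hone] at h0
      exact h0
    refine ⟨hE, fun s => hdet1 _ (fun f => ?_)⟩
    have hk := key2 0 (e f) s
    rw [h 0, hE s, map_zero, add_zero, pow_zero, one_smul, hde] at hk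
    exact hk.symm

end PseudoConnections
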